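/- Let W_ξ = (cos u / ξ(u)) V₁ + ∂_t - (cos²u / (2ξ²(u))) ∂_z on the open set where ξ(u) ≠ 0, where V₁ = cos t ∂_x + sin t (∂_y + x ∂_z) and V₂ = -sin t ∂_x + cos t (∂_y + x ∂_z). Then the Lie brackets satisfy [W_ξ, V₁] = V₂, [W_ξ, V₂] = (cos u / ξ(u)) ∂_z - V₁, and [W_ξ, ∂_z] = 0. -/

import Mathlib

open Real

/-- The Lie bracket of two vector fields on `ℝ⁵`:
`[X,Y](p) = DY(p)·X(p) - DX(p)·Y(p)`. -/
noncomputable def lieBracket (X Y : (Fin 5 → ℝ) → Fin 5 → ℝ) (p : Fin 5 → ℝ) : Fin 5 → ℝ :=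
  fderiv ℝ Y p (X p) - fderiv ℝ X p (Y p)

/-- `V₁ = cos t ∂_x + sin t (∂_y + x ∂_z)` in coordinates `(x,y,z,t,u)`. -/
noncomputable def V₁ (p : Fin 5 → ℝ) : Fin 5 → ℝ :=
  ![Real.cos (p 3), Real.sin (p 3), p 0 * Real.sin (p 3), 0, 0]

/-- `V₂ = -sin t ∂_x + cos t (∂_y + x ∂_z)` in coordinates `(x,y,z,t,u)`. -/
noncomputable def V₂ (p : Fin 5 → ℝ) : Fin 5 → ℝ :=
  ![-Real.sin (p 3), Real.cos (p 3), p 0 * Real.cos (p 3), 0, 0]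

/-- `W_ξ = (cos u/ξ(u)) V₁ + ∂_t - (cos²u/(2ξ²(u))) ∂_z`. -/
noncomputable def Wxi (ξ : ℝ → ℝ) (p : Fin 5 → ℝ) : Fin 5 → ℝ :=
  (Real.cos (p 4) / ξ (p 4)) • V₁ p + ![0, 0, 0, 1, 0]
    - (Real.cos (p 4) ^ 2 / (2 * ξ (p 4) ^ 2)) • ![0, 0, 1, 0, 0]

/-- Auxiliary: the `i`-th coordinate projection as a continuous linear map. -/
noncomputable def pr (i : Fin 5) : (Fin 5 → ℝ) →L[ℝ] ℝ :=
  ContinuousLinearMap.proj i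

@[simp] lemma pr_apply (i : Fin 5) (v : Fin 5 → ℝ) : pr i v = v i := rfl

lemma hasFDerivAt_V₁ (p : Fin 5 → ℝ) : HasFDerivAt V₁ (ContinuousLinearMap.pi
    ![(-Real.sin (p 3)) • pr 3, Real.cos (p 3) • pr 3,
      Real.sin (p 3) • pr 0 + (p 0 * Real.cos (p 3)) • pr 3,
      0, 0]) p := by
  refine hasFDerivAt_pi'' ?_
  intro i
  fin_cases i <;> simp [V₁, pr]
  · exact (hasFDerivAt_apply 3 p).cos
  · exact (hasFDerivAt_apply 3 p).sin
  · have := (hasFDerivAt_apply (𝕜 := ℝ) 0 p).mul ((hasFDerivAt_apply 3 p).sin)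
    refine this.congr_fderiv ?_
    ext v
    simp [pr]
    ring
  · exact hasFDerivAt_const 0 p
  · exact hasFDerivAt_const 0 p

lemma hasFDerivAt_V₂ (p : Fin 5 → ℝ) : HasFDerivAt V₂ (ContinuousLinearMap.pi
    ![(-Real.cos (p 3)) • pr 3, (-Real.sin (p 3)) • pr 3,
      Real.cos (p 3) • pr 0 + (-(p 0 * Real.sin (p 3))) • pr 3,
      0, 0]) p := by
  refine hasFDerivAt_pi'' ?_
  intro i
  fin_cases i <;> simp [V₂, pr]
  · refine ((hasFDerivAt_apply 3 p).sin).neg.congr_fderiv ?_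
    ext v; simp [pr]
  · convert (hasFDerivAt_apply 3 p).cos using 1
  · refine ((hasFDerivAt_apply (𝕜 := ℝ) 0 p).mul ((hasFDerivAt_apply 3 p).cos)).congr_fderiv ?_
    ext v; simp [pr]; ring
  · exact hasFDerivAt_const 0 p
  · exact hasFDerivAt_const 0 p

set_option maxHeartbeats 1600000 in
lemma hasFDerivAt_Wxi (ξ : ℝ → ℝ) (hsm : Differentiable ℝ ξ) (p : Fin 5 → ℝ)
    (hp : ξ (p 4) ≠ 0) :
    HasFDerivAt (Wxi ξ) (ContinuousLinearMap.pi
      ![Real.cos (p 3) • (deriv (fun u => Real.cos u / ξ u) (p 4) • pr 4)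
          + (Real.cos (p 4) / ξ (p 4)) • ((-Real.sin (p 3)) • pr 3),
        Real.sin (p 3) • (deriv (fun u => Real.cos u / ξ u) (p 4) • pr 4)
          + (Real.cos (p 4) / ξ (p 4)) • (Real.cos (p 3) • pr 3),
        (p 0 * Real.sin (p 3)) • (deriv (fun u => Real.cos u / ξ u) (p 4) • pr 4)
          + (Real.cos (p 4) / ξ (p 4)) •
            (Real.sin (p 3) • pr 0 + (p 0 * Real.cos (p 3)) • pr 3)
          - deriv (fun u => Real.cos u ^ 2 / (2 * ξ u ^ 2)) (p 4) • pr 4,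
        0, 0]) p := by
  have hda : DifferentiableAt ℝ (fun u => Real.cos u / ξ u) (p 4) :=
    (Real.differentiable_cos (p 4)).div (hsm (p 4)) hp
  have hdb : DifferentiableAt ℝ (fun u => Real.cos u ^ 2 / (2 * ξ u ^ 2)) (p 4) := by
    refine ((Real.differentiable_cos (p 4)).pow 2).div
      ((differentiable_const 2 (p 4)).mul ((hsm (p 4)).pow 2)) ?_
    simpa using pow_ne_zero 2 hp
  have ha : HasFDerivAt (fun q : Fin 5 → ℝ => Real.cos (q 4) / ξ (q 4))
      (deriv (fun u => Real.cos u / ξ u) (p 4) • pr 4) p :=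
    by have := hda.hasDerivAt.comp_hasFDerivAt p (hasFDerivAt_apply (𝕜 := ℝ) 4 p); exact this
  have hb : HasFDerivAt (fun q : Fin 5 → ℝ => Real.cos (q 4) ^ 2 / (2 * ξ (q 4) ^ 2))
      (deriv (fun u => Real.cos u ^ 2 / (2 * ξ u ^ 2)) (p 4) • pr 4) p :=
    by have := hdb.hasDerivAt.comp_hasFDerivAt p (hasFDerivAt_apply (𝕜 := ℝ) 4 p); exact this
  set ca := deriv (fun u => Real.cos u / ξ u) (p 4) with hca
  set cb := deriv (fun u => Real.cos u ^ 2 / (2 * ξ u ^ 2)) (p 4) with hcb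
  refine hasFDerivAt_pi'' ?_
  intro i
  fin_cases i <;> simp [Wxi, V₁, pr]
  · refine (ha.mul ((hasFDerivAt_apply 3 p).cos)).congr_fderiv ?_
    ext v
    simp [pr, ContinuousLinearMap.proj_pi]
    ring
  · refine (ha.mul ((hasFDerivAt_apply 3 p).sin)).congr_fderiv ?_
    ext v
    simp [pr, ContinuousLinearMap.proj_pi]
    ring
  · refine ((ha.mul ((hasFDerivAt_apply (𝕜 := ℝ) 0 p).mul
        ((hasFDerivAt_apply 3 p).sin))).sub hb).congr_fderiv ?_
    ext v
    simp [pr, ContinuousLinearMap.proj_pi]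
    ring
  · exact hasFDerivAt_const 1 p
  · exact hasFDerivAt_const 0 p

set_option maxHeartbeats 3200000 in
/-- On the open set where `ξ(u) ≠ 0`, the Lie brackets satisfy
`[W_ξ, V₁] = V₂`, `[W_ξ, V₂] = (cos u/ξ(u)) ∂_z - V₁` and `[W_ξ, ∂_z] = 0`,
where `ξ` is the smooth `2π`-periodic function equal to `±e^{-1/sin²u}` on
`±(0,π)` and `0` at multiples of `π`. -/
theorem lieBrackets_Wxi (ξ : ℝ → ℝ)
    (hsmooth : ContDiff ℝ (⊤ : ℕ∞) ξ)
    (hper : Function.Periodic ξ (2 * π))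
    (hpos : ∀ u ∈ Set.Ioo (0 : ℝ) π, ξ u = Real.exp (-1 / Real.sin u ^ 2))
    (hneg : ∀ u ∈ Set.Ioo (-π) (0 : ℝ), ξ u = -Real.exp (-1 / Real.sin u ^ 2))
    (hzero : ∀ n : ℤ, ξ (n * π) = 0)
    (p : Fin 5 → ℝ) (hp : ξ (p 4) ≠ 0) :
    lieBracket (Wxi ξ) V₁ p = V₂ p ∧
      lieBracket (Wxi ξ) V₂ p
        = (Real.cos (p 4) / ξ (p 4)) • ![0, 0, 1, 0, 0] - V₁ p ∧
      lieBracket (Wxi ξ) (fun _ => ![0, 0, 1, 0, 0]) p = 0 := by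
  have hsm : Differentiable ℝ ξ := hsmooth.differentiable (by simp)
  have hW := hasFDerivAt_Wxi ξ hsm p hp
  have h1 := hasFDerivAt_V₁ p
  have h2 := hasFDerivAt_V₂ p
  have hWv : Wxi ξ p = ![Real.cos (p 4) / ξ (p 4) * Real.cos (p 3),
      Real.cos (p 4) / ξ (p 4) * Real.sin (p 3),
      Real.cos (p 4) / ξ (p 4) * (p 0 * Real.sin (p 3))
        - Real.cos (p 4) ^ 2 / (2 * ξ (p 4) ^ 2), 1, 0] := by
    funext i; fin_cases i <;> simp [Wxi, V₁]
  refine ⟨?_, ?_, ?_⟩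
  · show fderiv ℝ V₁ p (Wxi ξ p) - fderiv ℝ (Wxi ξ) p (V₁ p) = V₂ p
    rw [h1.fderiv, hW.fderiv, hWv]
    funext i
    fin_cases i <;>
      simp [pr, V₁, V₂, ContinuousLinearMap.pi_apply] <;> ring
  · show fderiv ℝ V₂ p (Wxi ξ p) - fderiv ℝ (Wxi ξ) p (V₂ p)
        = (Real.cos (p 4) / ξ (p 4)) • ![0, 0, 1, 0, 0] - V₁ p
    rw [h2.fderiv, hW.fderiv, hWv]
    funext i
    fin_cases i <;>
      simp [pr, V₁, V₂, ContinuousLinearMap.pi_apply] <;> try ring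
    linear_combination (Real.cos (p 4) * (ξ (p 4))⁻¹) * Real.sin_sq_add_cos_sq (p 3)
  · show fderiv ℝ (fun _ : Fin 5 → ℝ => ![(0:ℝ), 0, 1, 0, 0]) p (Wxi ξ p)
        - fderiv ℝ (Wxi ξ) p ![0, 0, 1, 0, 0] = 0
    rw [fderiv_fun_const, hW.fderiv]
    funext i
    fin_cases i <;>
      simp [pr, ContinuousLinearMap.pi_apply]
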